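/- arXiv:2303.01929 — 3 statements merged into one kernel-verified Lean document; each statement's English description precedes it below -/
import Mathlib

section
/- Let S be a Cu-semigroup satisfying (O5), let u ∈ S be a full compact element, and suppose there exists R ∈ ℕ such that for all x, y ∈ S: if λ(x) + R·λ(u) ≤ λ(y) for every functional λ on S, then x ≤ y (that is, (S,u) has radius of comparison at most R). Then (S,u) has LBCA for uniformly full elements: for every γ ∈ (0,1) and every d ∈ ℕ there exists N ∈ ℕ such that for all x, y ∈ S with x ≤ d·u, y ≤ d·u and u ≤ d·y: if λ(x) ≤ γ·λ(y) for every functional λ on S, then x ≤_N y. -/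
open scoped ENNReal

section CuPreamble

variable {S : Type*} [AddCommMonoid S] [PartialOrder S]

/-- The way-below (compact containment) relation: `x ≪ y` if for every increasing
sequence with a supremum above `y`, some term dominates `x`. -/
def WayBelow (x y : S) : Prop :=
  ∀ (f : ℕ → S) (s : S), Monotone f → IsLUB (Set.range f) s → y ≤ s → ∃ n, x ≤ f n

/-- A Cu-semigroup: a positively ordered commutative monoid satisfying (O1)-(O4). -/
structure IsCuSemigroup (S : Type*) [AddCommMonoid S] [PartialOrder S] : Prop where
  zero_le : ∀ x : S, 0 ≤ x
  add_le_add : ∀ ⦃a b c d : S⦄, a ≤ b → c ≤ d → a + c ≤ b + d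
  O1 : ∀ f : ℕ → S, Monotone f → ∃ s : S, IsLUB (Set.range f) s
  O2 : ∀ x : S, ∃ f : ℕ → S, (∀ n, WayBelow (f n) (f (n + 1))) ∧ IsLUB (Set.range f) x
  O3 : ∀ ⦃x₁ x₂ y₁ y₂ : S⦄, WayBelow x₁ x₂ → WayBelow y₁ y₂ → WayBelow (x₁ + y₁) (x₂ + y₂)
  O4 : ∀ (f g : ℕ → S) (s t : S), Monotone f → Monotone g → IsLUB (Set.range f) s →
    IsLUB (Set.range g) t → IsLUB (Set.range fun n => f n + g n) (s + t)

/-- The axiom (O5), including the strengthened form. -/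
def SatisfiesO5 (S : Type*) [AddCommMonoid S] [PartialOrder S] : Prop :=
  (∀ x' x y : S, WayBelow x' x → x ≤ y → ∃ z : S, x' + z ≤ y ∧ y ≤ x + z) ∧
  (∀ x' x y w' w : S, WayBelow x' x → x + w ≤ y → WayBelow w' w →
    ∃ z : S, WayBelow w' z ∧ x' + z ≤ y ∧ y ≤ x + z)

/-- The axiom (O6). -/
def SatisfiesO6 (S : Type*) [AddCommMonoid S] [PartialOrder S] : Prop :=
  ∀ x' x y z : S, WayBelow x' x → x ≤ y + z →
    ∃ y' z' : S, x' ≤ y' + z' ∧ y' ≤ y ∧ y' ≤ x ∧ z' ≤ z ∧ z' ≤ x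

/-- A functional on a Cu-semigroup: a map to `[0,∞]` preserving order, addition, zero,
and suprema of increasing sequences. -/
structure IsFunctional (l : S → ℝ≥0∞) : Prop where
  mono : Monotone l
  map_zero : l 0 = 0
  map_add : ∀ x y : S, l (x + y) = l x + l y
  map_sup : ∀ (f : ℕ → S) (s : S), Monotone f → IsLUB (Set.range f) s → l s = ⨆ n, l (f n)

/-- Edwards' condition. -/
def EdwardsCondition (S : Type*) [AddCommMonoid S] [PartialOrder S] : Prop :=
  ∀ l : S → ℝ≥0∞, IsFunctional l → ∀ x y : S,
    sInf {r : ℝ≥0∞ | ∃ l₁ l₂ : S → ℝ≥0∞, IsFunctional l₁ ∧ IsFunctional l₂ ∧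
        (∀ s : S, l₁ s + l₂ s = l s) ∧ r = l₁ x + l₂ y} =
    sSup {r : ℝ≥0∞ | ∃ z : S, z ≤ x ∧ z ≤ y ∧ r = l z}

/-- A scale on a Cu-semigroup. -/
structure IsScale (Sg : Set S) : Prop where
  hered : ∀ ⦃x y : S⦄, y ≤ x → x ∈ Sg → y ∈ Sg
  supClosed : ∀ (f : ℕ → S) (s : S), Monotone f → (∀ n, f n ∈ Sg) →
    IsLUB (Set.range f) s → s ∈ Sg
  generates : ∀ x' x : S, WayBelow x' x → ∃ L : List S, (∀ z ∈ L, z ∈ Sg) ∧ x' ≤ L.sum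

/-- The `d`-fold amplification `Σ^{(d)}` of a scale. -/
def scaleAmp (Sg : Set S) : ℕ → Set S
  | 0 => {0}
  | d + 1 => {x : S | ∀ x' : S, WayBelow x' x →
      ∃ f : Fin (d + 1) → S, (∀ i, f i ∈ Sg) ∧ WayBelow x' (∑ i, f i)}

end CuPreamble

/-
Evaluating the radius-of-comparison hypothesis on `n • x` and `n • y`: for every functional `λ`,
`n λ(x) + R λ(u) ≤ n γ λ(y) + R d λ(y)` because `λ(x) ≤ γ λ(y)` and `λ(u) ≤ d λ(y)`, and the
right-hand side is at most `n λ(y)` as soon as `R d ≤ n (1 - γ)`.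
-/

theorem IsFunctional.map_nsmul {S : Type*} [AddCommMonoid S] [PartialOrder S]
    {l : S → ℝ≥0∞} (hl : IsFunctional l) (n : ℕ) (x : S) : l (n • x) = n * l x := by
  induction n with
  | zero => simpa using hl.map_zero
  | succ n ih => rw [succ_nsmul, hl.map_add, ih]; push_cast; ring

theorem ENNReal.exists_forall_nat_mul_add_le {γ c : ℝ≥0∞} (hγ : γ < 1) (hc : c ≠ ∞) :
    ∃ N : ℕ, ∀ n : ℕ, N ≤ n → n * γ + c ≤ n := by
  obtain ⟨N, hN⟩ := ENNReal.exists_nat_mul_gt (tsub_pos_of_lt hγ).ne' hc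
  refine ⟨N, fun n hn => ?_⟩
  calc (n : ℝ≥0∞) * γ + c ≤ n * γ + n * (1 - γ) := by
        gcongr
        exact hN.le.trans (mul_le_mul_left (by exact_mod_cast hn) _)
    _ = n := by rw [← mul_add, add_tsub_cancel_of_le hγ.le, mul_one]

theorem IsFunctional.add_mul_le_of_le_mul {S : Type*} [AddCommMonoid S] [PartialOrder S]
    {l : S → ℝ≥0∞} (hl : IsFunctional l) {x y u : S} {γ : ℝ≥0∞} {d R n : ℕ}
    (hxy : l x ≤ γ * l y) (huy : u ≤ d • y) (hn : n * γ + R * d ≤ n) :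
    l (n • x) + R * l u ≤ l (n • y) := by
  have hu : l u ≤ d * l y := hl.map_nsmul d y ▸ hl.mono huy
  rw [hl.map_nsmul, hl.map_nsmul]
  calc (n : ℝ≥0∞) * l x + R * l u ≤ n * (γ * l y) + R * (d * l y) := by gcongr
    _ = (n * γ + R * d) * l y := by ring
    _ ≤ n * l y := by gcongr

theorem stmt_8_general {S : Type*} [AddCommMonoid S] [PartialOrder S]
    (u : S)
    (R : ℕ)
    (hR : ∀ x y : S, (∀ l : S → ℝ≥0∞, IsFunctional l → l x + R * l u ≤ l y) → x ≤ y) :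
    ∀ γ : ℝ≥0∞, 0 < γ → γ < 1 → ∀ d : ℕ, ∃ N : ℕ, ∀ x y : S,
      x ≤ d • u → y ≤ d • u → u ≤ d • y →
      (∀ l : S → ℝ≥0∞, IsFunctional l → l x ≤ γ * l y) →
      ∀ n : ℕ, N ≤ n → n • x ≤ n • y := by
  intro γ _ hγ d
  obtain ⟨N, hN⟩ := ENNReal.exists_forall_nat_mul_add_le hγ (by finiteness : (R * d : ℝ≥0∞) ≠ ∞)
  exact ⟨N, fun x y _ _ huy hxy n hn =>
    hR _ _ fun l hl => hl.add_mul_le_of_le_mul (hxy l hl) huy (hN n hn)⟩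

/-- A Cu-semigroup with (O5) and a full compact element `u` with radius of comparison
at most `R` has LBCA for uniformly full elements. -/
theorem stmt_8 {S : Type*} [AddCommMonoid S] [PartialOrder S]
    (hCu : IsCuSemigroup S) (hO5 : SatisfiesO5 S) (u : S)
    (hu_compact : WayBelow u u)
    (hu_full : ∃ t : S, IsLUB (Set.range fun n : ℕ => n • u) t ∧ ∀ x : S, x ≤ t)
    (R : ℕ)
    (hR : ∀ x y : S, (∀ l : S → ℝ≥0∞, IsFunctional l → l x + R * l u ≤ l y) → x ≤ y) :
    ∀ γ : ℝ≥0∞, 0 < γ → γ < 1 → ∀ d : ℕ, ∃ N : ℕ, ∀ x y : S,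
      x ≤ d • u → y ≤ d • u → u ≤ d • y →
      (∀ l : S → ℝ≥0∞, IsFunctional l → l x ≤ γ * l y) →
      ∀ n : ℕ, N ≤ n → n • x ≤ n • y :=
  stmt_8_general u R hR
end

section
/- Let S be a Cu-semigroup satisfying (O5) that has m-comparison and is n-almost divisible for some m, n ∈ ℕ. Suppose that the only functionals on S are the zero functional and the functional sending 0 to 0 and every nonzero element to ∞. Then x ≤ y for all x, y ∈ S with y ≠ 0. -/
open scoped ENNReal

/-!
Pick `0 ≠ y' ≪ y` and, by almost divisibility, `z` with `(m + 1) • z ≤ y` and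
`y' ≤ ((m + 2) * (n + 1)) • z`, so `z ≠ 0`. Since `x` is the supremum of the `x' ≪ x`,
`m`-comparison reduces the claim to `x' <_s z` for every `x' ≪ x`.

If `x' <_s z` failed, a Goodearl–Handelman (Zorn) argument, applied to the ideal
`{s | ∃ N, s ≤ N • z}` preordered so that `z ≼ x'` and bounded summands cancel, would give a
monotone additive `φ` on that ideal with `φ z = 1 ≤ φ x'`. Extending `φ` by `∞` and regularizing,
`λ s = ⨆_{t ≪ s} φ t` is a functional with `λ z ≤ 1` and `λ x ≥ 1`, so it is neither of the two
trivial functionals. The same regularization of the indicator of the ideal shows that every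
`t ≪ x`, in particular `x'`, lies in the ideal.
-/

theorem AddSubmonoid.mem_sup_multiples_iff {M : Type*} [AddCommMonoid M] {P : AddSubmonoid M}
    {w s : M} :
    s ∈ P ⊔ AddSubmonoid.multiples w ↔ ∃ a ∈ P, ∃ k : ℕ, a + k • w = s := by
  simp only [AddSubmonoid.mem_sup, AddSubmonoid.mem_multiples_iff]
  constructor
  · rintro ⟨a, ha, _, ⟨k, rfl⟩, rfl⟩
    exact ⟨a, ha, k, rfl⟩
  · rintro ⟨a, ha, k, rfl⟩
    exact ⟨a, ha, _, ⟨k, rfl⟩, rfl⟩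

section States

variable {M : Type*} [AddCommMonoid M] [Preorder M]

structure PartialState (u : M) where
  dom : AddSubmonoid M
  toFun : M → ℝ
  unit_mem : u ∈ dom
  map_unit : toFun u = 1
  map_add : ∀ a ∈ dom, ∀ b ∈ dom, toFun (a + b) = toFun a + toFun b
  monotoneOn : MonotoneOn toFun dom

namespace PartialState

variable {u : M}

instance : Preorder (PartialState u) where
  le p q := p.dom ≤ q.dom ∧ Set.EqOn p.toFun q.toFun p.dom
  le_refl p := ⟨le_rfl, Set.eqOn_refl _ _⟩
  le_trans _ _ _ hpq hqr := ⟨hpq.1.trans hqr.1, hpq.2.trans (hqr.2.mono hpq.1)⟩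

theorem map_zero (p : PartialState u) : p.toFun 0 = 0 := by
  have := p.map_add 0 p.dom.zero_mem 0 p.dom.zero_mem
  rw [add_zero] at this
  linarith

theorem map_nsmul (p : PartialState u) {a : M} (ha : a ∈ p.dom) (k : ℕ) :
    p.toFun (k • a) = k * p.toFun a := by
  induction k with
  | zero => simp [p.map_zero]
  | succ k ih =>
    rw [succ_nsmul, p.map_add _ (p.dom.nsmul_mem ha k) _ ha, ih]
    push_cast
    ring

theorem bddAbove_of_isChain {c : Set (PartialState u)} (hc : IsChain (· ≤ ·) c)
    (hne : c.Nonempty) : BddAbove c := by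
  classical
  obtain ⟨p₀, hp₀⟩ := hne
  have common : ∀ {a b : M}, (∃ p ∈ c, a ∈ p.dom) → (∃ q ∈ c, b ∈ q.dom) →
      ∃ r ∈ c, a ∈ r.dom ∧ b ∈ r.dom := by
    rintro a b ⟨p, hp, ha⟩ ⟨q, hq, hb⟩
    rcases hc.total hp hq with hpq | hqp
    · exact ⟨q, hq, hpq.1 ha, hb⟩
    · exact ⟨p, hp, ha, hqp.1 hb⟩
  let dom : AddSubmonoid M :=
    { carrier := {s | ∃ p ∈ c, s ∈ p.dom}
      zero_mem' := ⟨p₀, hp₀, p₀.dom.zero_mem⟩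
      add_mem' := fun ha hb => by
        obtain ⟨r, hr, ha, hb⟩ := common ha hb
        exact ⟨r, hr, r.dom.add_mem ha hb⟩ }
  let toFun (s : M) : ℝ := if h : ∃ p ∈ c, s ∈ p.dom then h.choose.toFun s else 0
  have toFun_eq {p : PartialState u} (hp : p ∈ c) {s : M} (hs : s ∈ p.dom) :
      toFun s = p.toFun s := by
    have h : ∃ p ∈ c, s ∈ p.dom := ⟨p, hp, hs⟩
    simp only [toFun, dif_pos h]
    obtain ⟨hq, hsq⟩ := h.choose_spec
    rcases hc.total hq hp with hqp | hpq
    · exact hqp.2 hsq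
    · exact (hpq.2 hs).symm
  refine ⟨⟨dom, toFun, ⟨p₀, hp₀, p₀.unit_mem⟩, ?_, ?_, ?_⟩, fun p hp => ⟨?_, ?_⟩⟩
  · rw [toFun_eq hp₀ p₀.unit_mem, p₀.map_unit]
  · intro a ha b hb
    obtain ⟨r, hr, ha, hb⟩ := common ha hb
    rw [toFun_eq hr (r.dom.add_mem ha hb), toFun_eq hr ha, toFun_eq hr hb, r.map_add a ha b hb]
  · intro a ha b hb hab
    obtain ⟨r, hr, ha, hb⟩ := common ha hb
    rw [toFun_eq hr ha, toFun_eq hr hb]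
    exact r.monotoneOn ha hb hab
  · exact fun s hs => ⟨p, hp, hs⟩
  · exact fun s hs => (toFun_eq hp hs).symm

theorem mul_sub_le_mul_sub [IsOrderedAddMonoid M] (p : PartialState u) {a b a' b' w : M}
    {j j' : ℕ} (ha : a ∈ p.dom) (hb : b ∈ p.dom) (ha' : a' ∈ p.dom) (hb' : b' ∈ p.dom)
    (h : a ≤ b + j • w) (h' : b' + j' • w ≤ a') :
    j' * (p.toFun a - p.toFun b) ≤ j * (p.toFun a' - p.toFun b') := by
  have key : j' • a + j • b' ≤ j' • b + j • a' :=
    calc j' • a + j • b' ≤ j' • (b + j • w) + j • b' := by gcongr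
      _ = j' • b + j • (b' + j' • w) := by
        rw [smul_add, smul_add, smul_smul, smul_smul, mul_comm]
        abel
      _ ≤ j' • b + j • a' := by gcongr
  have hmem : ∀ {x y : M}, x ∈ p.dom → y ∈ p.dom → ∀ k l : ℕ, k • x + l • y ∈ p.dom :=
    fun hx hy k l => p.dom.add_mem (p.dom.nsmul_mem hx k) (p.dom.nsmul_mem hy l)
  have := p.monotoneOn (hmem ha hb' j' j) (hmem hb ha' j' j) key
  rw [p.map_add _ (p.dom.nsmul_mem ha _) _ (p.dom.nsmul_mem hb' _),
    p.map_add _ (p.dom.nsmul_mem hb _) _ (p.dom.nsmul_mem ha' _), p.map_nsmul ha,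
    p.map_nsmul hb', p.map_nsmul hb, p.map_nsmul ha'] at this
  linarith

variable [IsOrderedCancelAddMonoid M]

theorem le_of_nsmul_le_nsmul (h0 : ∀ a : M, 0 ≤ a) (hu : ¬u ≤ 0) {k l : ℕ}
    (h : k • u ≤ l • u) : k ≤ l := by
  by_contra! hlk
  obtain ⟨d, rfl⟩ := Nat.exists_eq_add_of_lt hlk
  have h' : (d + 1) • u + l • u ≤ 0 + l • u := by
    rwa [← add_nsmul, zero_add, add_comm, ← add_assoc]
  refine hu ((le_add_of_nonneg_left (h0 (d • u))).trans ?_)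
  rw [← succ_nsmul]
  exact le_of_add_le_add_right h'

theorem nonempty (h0 : ∀ a : M, 0 ≤ a) (hu : ¬u ≤ 0) : Nonempty (PartialState u) := by
  classical
  let toFun (v : M) : ℝ := if h : ∃ k : ℕ, k • u = v then h.choose else 0
  have toFun_nsmul (k : ℕ) : toFun (k • u) = k := by
    have h : ∃ l : ℕ, l • u = k • u := ⟨k, rfl⟩
    simp only [toFun, dif_pos h]
    exact_mod_cast le_antisymm (le_of_nsmul_le_nsmul h0 hu h.choose_spec.le)
      (le_of_nsmul_le_nsmul h0 hu h.choose_spec.ge)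
  refine ⟨⟨AddSubmonoid.multiples u, toFun, AddSubmonoid.mem_multiples u,
    by simpa using toFun_nsmul 1, ?_, ?_⟩⟩
  · simp only [AddSubmonoid.mem_multiples_iff]
    rintro _ ⟨k, rfl⟩ _ ⟨l, rfl⟩
    rw [← add_nsmul, toFun_nsmul, toFun_nsmul, toFun_nsmul]
    push_cast
    rfl
  · simp only [MonotoneOn, SetLike.mem_coe, AddSubmonoid.mem_multiples_iff]
    rintro _ ⟨k, rfl⟩ _ ⟨l, rfl⟩ h
    rw [toFun_nsmul, toFun_nsmul]
    exact_mod_cast le_of_nsmul_le_nsmul h0 hu h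

/-- The value forced on `w` by a one-step extension of `p`: the supremum of the lower bounds
`(f a - f b) / j` coming from `a ≤ b + j • w`. -/
noncomputable def slope (p : PartialState u) (w : M) : ℝ :=
  sSup {r | ∃ a ∈ p.dom, ∃ b ∈ p.dom, ∃ j : ℕ, 0 < j ∧ a ≤ b + j • w ∧
    r = (p.toFun a - p.toFun b) / j}

theorem sub_le_mul_slope (hunit : ∀ a : M, ∃ N : ℕ, a ≤ N • u) (p : PartialState u)
    {a b w : M} {j : ℕ} (ha : a ∈ p.dom) (hb : b ∈ p.dom) (h : a ≤ b + j • w) :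
    p.toFun a - p.toFun b ≤ j * p.slope w := by
  rcases Nat.eq_zero_or_pos j with rfl | hj
  · simpa using p.monotoneOn ha hb (by simpa using h)
  obtain ⟨N, hN⟩ := hunit w
  have hNu : N • u ∈ p.dom := p.dom.nsmul_mem p.unit_mem N
  have hbdd : BddAbove {r | ∃ a ∈ p.dom, ∃ b ∈ p.dom, ∃ j : ℕ, 0 < j ∧ a ≤ b + j • w ∧
      r = (p.toFun a - p.toFun b) / j} := by
    refine ⟨N, ?_⟩
    rintro _ ⟨a, ha, b, hb, j, hj, h, rfl⟩
    have := p.mul_sub_le_mul_sub (j' := 1) ha hb hNu p.dom.zero_mem h (by simpa using hN)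
    rw [p.map_nsmul p.unit_mem, p.map_unit, p.map_zero, Nat.cast_one, one_mul, mul_one,
      sub_zero] at this
    rw [div_le_iff₀ (by exact_mod_cast hj)]
    linarith
  have := le_csSup hbdd ⟨a, ha, b, hb, j, hj, h, rfl⟩
  rwa [div_le_iff₀ (by exact_mod_cast hj), mul_comm] at this

theorem mul_slope_le_sub (h0 : ∀ a : M, 0 ≤ a) (p : PartialState u) {a b w : M} {j : ℕ}
    (ha : a ∈ p.dom) (hb : b ∈ p.dom) (h : b + j • w ≤ a) :
    j * p.slope w ≤ p.toFun a - p.toFun b := by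
  rcases Nat.eq_zero_or_pos j with rfl | hj
  · simpa using p.monotoneOn hb ha (by simpa using h)
  have hjpos : (0 : ℝ) < j := by exact_mod_cast hj
  suffices p.slope w ≤ (p.toFun a - p.toFun b) / j by rwa [le_div_iff₀ hjpos, mul_comm] at this
  refine csSup_le ⟨0, 0, p.dom.zero_mem, 0, p.dom.zero_mem, 1, one_pos, by simpa using h0 w,
    by simp⟩ ?_
  rintro _ ⟨a', ha', b', hb', j', hj', h', rfl⟩
  have := p.mul_sub_le_mul_sub ha' hb' ha hb h' h
  rw [div_le_div_iff₀ (by exact_mod_cast hj') hjpos]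
  linarith

theorem add_mul_slope_le (h0 : ∀ a : M, 0 ≤ a) (hunit : ∀ a : M, ∃ N : ℕ, a ≤ N • u)
    (p : PartialState u) {a b w : M} {k l : ℕ} (ha : a ∈ p.dom) (hb : b ∈ p.dom)
    (h : a + k • w ≤ b + l • w) :
    p.toFun a + k * p.slope w ≤ p.toFun b + l * p.slope w := by
  rcases le_total k l with hkl | hlk
  · obtain ⟨d, rfl⟩ := Nat.exists_eq_add_of_le hkl
    rw [add_nsmul, add_comm (k • w), ← add_assoc] at h
    have := p.sub_le_mul_slope hunit ha hb (le_of_add_le_add_right h)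
    push_cast
    linarith
  · obtain ⟨d, rfl⟩ := Nat.exists_eq_add_of_le hlk
    rw [add_nsmul, add_comm (l • w), ← add_assoc] at h
    have := p.mul_slope_le_sub h0 hb ha (le_of_add_le_add_right h)
    push_cast
    linarith

open scoped Classical in
noncomputable def extendFun (p : PartialState u) (w s : M) : ℝ :=
  if h : ∃ q : M × ℕ, q.1 ∈ p.dom ∧ q.1 + q.2 • w = s then
    p.toFun h.choose.1 + h.choose.2 * p.slope w
  else 0

theorem extendFun_add_nsmul (h0 : ∀ a : M, 0 ≤ a) (hunit : ∀ a : M, ∃ N : ℕ, a ≤ N • u)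
    (p : PartialState u) {a w : M} (ha : a ∈ p.dom) (k : ℕ) :
    p.extendFun w (a + k • w) = p.toFun a + k * p.slope w := by
  have h : ∃ q : M × ℕ, q.1 ∈ p.dom ∧ q.1 + q.2 • w = a + k • w := ⟨(a, k), ha, rfl⟩
  rw [extendFun, dif_pos h]
  obtain ⟨hq, hqeq⟩ := h.choose_spec
  exact le_antisymm (p.add_mul_slope_le h0 hunit hq ha hqeq.le)
    (p.add_mul_slope_le h0 hunit ha hq hqeq.ge)

theorem exists_ge_mem (h0 : ∀ a : M, 0 ≤ a) (hunit : ∀ a : M, ∃ N : ℕ, a ≤ N • u)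
    (p : PartialState u) (w : M) : ∃ q : PartialState u, p ≤ q ∧ w ∈ q.dom := by
  have hval {a : M} (ha : a ∈ p.dom) (k : ℕ) :
      p.extendFun w (a + k • w) = p.toFun a + k * p.slope w :=
    p.extendFun_add_nsmul h0 hunit ha k
  have hval₀ {a : M} (ha : a ∈ p.dom) : p.extendFun w a = p.toFun a := by
    simpa using hval ha 0
  refine ⟨⟨p.dom ⊔ AddSubmonoid.multiples w, p.extendFun w,
    AddSubmonoid.mem_sup_left p.unit_mem, by rw [hval₀ p.unit_mem, p.map_unit], ?_, ?_⟩,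
    ⟨le_sup_left, fun s hs => (hval₀ hs).symm⟩,
    AddSubmonoid.mem_sup_right (AddSubmonoid.mem_multiples w)⟩
  · simp only [AddSubmonoid.mem_sup_multiples_iff]
    rintro _ ⟨a, ha, k, rfl⟩ _ ⟨b, hb, l, rfl⟩
    have : a + k • w + (b + l • w) = (a + b) + (k + l) • w := by rw [add_nsmul]; abel
    rw [this, hval (p.dom.add_mem ha hb), hval ha, hval hb, p.map_add a ha b hb]
    push_cast
    ring
  · simp only [MonotoneOn, SetLike.mem_coe, AddSubmonoid.mem_sup_multiples_iff]
    rintro _ ⟨a, ha, k, rfl⟩ _ ⟨b, hb, l, rfl⟩ h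
    rw [hval ha, hval hb]
    exact p.add_mul_slope_le h0 hunit ha hb h

end PartialState

theorem exists_monotone_addMonoidHom [IsOrderedCancelAddMonoid M] {u : M} (h0 : ∀ a : M, 0 ≤ a)
    (hunit : ∀ a : M, ∃ N : ℕ, a ≤ N • u) (hu : ¬u ≤ 0) :
    ∃ f : M →+ ℝ, Monotone f ∧ f u = 1 := by
  have := PartialState.nonempty h0 hu
  obtain ⟨p, hp⟩ := zorn_le_nonempty (α := PartialState u) fun _ hc hne =>
    PartialState.bddAbove_of_isChain hc hne
  have hdom (w : M) : w ∈ p.dom := by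
    obtain ⟨q, hpq, hw⟩ := p.exists_ge_mem h0 hunit w
    exact (hp hpq).1 hw
  exact ⟨⟨⟨p.toFun, p.map_zero⟩, fun a b => p.map_add a (hdom a) b (hdom b)⟩,
    fun a b h => p.monotoneOn (hdom a) (hdom b) h, p.map_unit⟩

end States

section OrderedAddMonoid

variable {S : Type*} [AddCommMonoid S] [Preorder S] [IsOrderedAddMonoid S]

theorem nsmul_add_le_nsmul_add {a b c : S} (h : a + c ≤ b + c) (j : ℕ) :
    j • a + c ≤ j • b + c := by
  induction j with
  | zero => simp
  | succ j ih =>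
    calc (j + 1) • a + c = j • a + (a + c) := by rw [succ_nsmul, add_assoc]
      _ ≤ j • a + (b + c) := by gcongr
      _ = b + (j • a + c) := by abel
      _ ≤ b + (j • b + c) := by gcongr
      _ = (j + 1) • b + c := by rw [succ_nsmul]; abel

theorem exists_succ_nsmul_le_nsmul_of_add_le_add {x z c : S} {N t : ℕ} (hc₀ : 0 ≤ c)
    (hc : c ≤ N • z) (h : (t + 1) • x + c ≤ t • z + c) : ∃ T : ℕ, (T + 1) • x ≤ T • z := by
  refine ⟨(N + 1) * t + N, ?_⟩
  calc ((N + 1) * t + N + 1) • x = (N + 1) • ((t + 1) • x) := by rw [smul_smul]; ring_nf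
    _ ≤ (N + 1) • ((t + 1) • x) + c := le_add_of_nonneg_right hc₀
    _ ≤ (N + 1) • (t • z) + c := nsmul_add_le_nsmul_add h (N + 1)
    _ ≤ (N + 1) • (t • z) + N • z := by gcongr
    _ = ((N + 1) * t + N) • z := by rw [smul_smul, add_nsmul]

def boundedBy (z : S) : AddSubmonoid S where
  carrier := {s | ∃ N : ℕ, s ≤ N • z}
  zero_mem' := ⟨0, by simp⟩
  add_mem' := by
    rintro a b ⟨N, hN⟩ ⟨K, hK⟩
    exact ⟨N + K, by rw [add_nsmul]; exact add_le_add hN hK⟩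

theorem mem_boundedBy_of_le {a b z : S} (h : a ≤ b) (hb : b ∈ boundedBy z) :
    a ∈ boundedBy z :=
  hb.imp fun _ => h.trans

theorem self_mem_boundedBy (z : S) : z ∈ boundedBy z := ⟨1, by simp⟩

/-- The ideal generated by `z`, carrying (below) the translation-invariant, cancellative preorder
generated by `≤` and `z ≼ x'`. -/
@[ext]
structure ForcedOrder (z x' : S) where
  val : S
  mem : val ∈ boundedBy z

namespace ForcedOrder

variable {z x' : S}

instance : Zero (ForcedOrder z x') := ⟨⟨0, zero_mem _⟩⟩
instance : Add (ForcedOrder z x') := ⟨fun a b => ⟨a.val + b.val, add_mem a.mem b.mem⟩⟩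
instance : SMul ℕ (ForcedOrder z x') := ⟨fun n a => ⟨n • a.val, nsmul_mem a.mem n⟩⟩

instance : AddCommMonoid (ForcedOrder z x') :=
  Function.Injective.addCommMonoid val (fun _ _ => ForcedOrder.ext) rfl (fun _ _ => rfl)
    (fun _ _ => rfl)

@[simp] theorem val_zero : (0 : ForcedOrder z x').val = 0 := rfl
@[simp] theorem val_add (a b : ForcedOrder z x') : (a + b).val = a.val + b.val := rfl
@[simp] theorem val_nsmul (n : ℕ) (a : ForcedOrder z x') : (n • a).val = n • a.val := rfl

instance : Preorder (ForcedOrder z x') where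
  le a b := ∃ k : ℕ, ∃ c ∈ boundedBy z, a.val + k • x' + c ≤ b.val + k • z + c
  le_refl a := ⟨0, 0, zero_mem _, by simp⟩
  le_trans a b e := by
    rintro ⟨k, c, hc, h₁⟩ ⟨l, d, hd, h₂⟩
    refine ⟨k + l, c + d, add_mem hc hd, ?_⟩
    calc a.val + (k + l) • x' + (c + d) = (a.val + k • x' + c) + (l • x' + d) := by
          rw [add_nsmul]; abel
      _ ≤ (b.val + k • z + c) + (l • x' + d) := by gcongr
      _ = (b.val + l • x' + d) + (k • z + c) := by abel
      _ ≤ (e.val + l • z + d) + (k • z + c) := by gcongr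
      _ = e.val + (k + l) • z + (c + d) := by rw [add_nsmul]; abel

theorem le_def {a b : ForcedOrder z x'} :
    a ≤ b ↔ ∃ k : ℕ, ∃ c ∈ boundedBy z, a.val + k • x' + c ≤ b.val + k • z + c :=
  Iff.rfl

instance : IsOrderedCancelAddMonoid (ForcedOrder z x') where
  add_le_add_left a b := by
    rintro ⟨k, c, hc, h⟩ e
    refine ⟨k, c, hc, ?_⟩
    calc (a + e).val + k • x' + c = (a.val + k • x' + c) + e.val := by rw [val_add]; abel
      _ ≤ (b.val + k • z + c) + e.val := by gcongr
      _ = (b + e).val + k • z + c := by rw [val_add]; abel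
  le_of_add_le_add_left e a b := by
    rintro ⟨k, c, hc, h⟩
    refine ⟨k, e.val + c, add_mem e.mem hc, ?_⟩
    calc a.val + k • x' + (e.val + c) = (e + a).val + k • x' + c := by rw [val_add]; abel
      _ ≤ (e + b).val + k • z + c := h
      _ = b.val + k • z + (e.val + c) := by rw [val_add]; abel

theorem mk_le_mk {a b : S} (ha : a ∈ boundedBy z) (hb : b ∈ boundedBy z) (h : a ≤ b) :
    (⟨a, ha⟩ : ForcedOrder z x') ≤ ⟨b, hb⟩ :=
  le_def.2 ⟨0, 0, zero_mem _, by simpa using h⟩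

theorem zero_le (h0 : ∀ s : S, 0 ≤ s) (a : ForcedOrder z x') : 0 ≤ a :=
  le_def.2 ⟨0, 0, zero_mem _, by simpa using h0 a.val⟩

theorem exists_le_nsmul (a : ForcedOrder z x') :
    ∃ N : ℕ, a ≤ N • ⟨z, self_mem_boundedBy z⟩ := by
  obtain ⟨N, hN⟩ := a.mem
  exact ⟨N, le_def.2 ⟨0, 0, zero_mem _, by simpa using hN⟩⟩

theorem unit_le (hx' : x' ∈ boundedBy z) :
    (⟨z, self_mem_boundedBy z⟩ : ForcedOrder z x') ≤ ⟨x', hx'⟩ :=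
  le_def.2 ⟨1, 0, zero_mem _, by simp [add_comm]⟩

theorem not_unit_le_zero (h0 : ∀ s : S, 0 ≤ s) (hx' : x' ∈ boundedBy z)
    (H : ∀ t : ℕ, ¬(t + 1) • x' ≤ t • z) :
    ¬(⟨z, self_mem_boundedBy z⟩ : ForcedOrder z x') ≤ 0 := by
  rw [le_def]
  rintro ⟨k, c, ⟨N, hc⟩, h⟩
  obtain ⟨K, hK⟩ := hx'
  simp only [val_zero, zero_add] at h
  have key : (K * k + 1) • x' + c ≤ (K * k) • z + c :=
    calc (K * k + 1) • x' + c = K • (k • x') + x' + c := by rw [succ_nsmul, smul_smul]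
      _ ≤ K • (k • x') + K • z + c := by gcongr
      _ = K • (z + k • x') + c := by rw [smul_add]; abel
      _ ≤ K • (k • z) + c := nsmul_add_le_nsmul_add h K
      _ = (K * k) • z + c := by rw [smul_smul]
  obtain ⟨T, hT⟩ := exists_succ_nsmul_le_nsmul_of_add_le_add (h0 c) hc key
  exact H T hT

end ForcedOrder

theorem exists_ennrealState_of_forall_not_succ_nsmul_le {z x' : S} (h0 : ∀ s : S, 0 ≤ s)
    (hx' : x' ∈ boundedBy z) (H : ∀ t : ℕ, ¬(t + 1) • x' ≤ t • z) :
    ∃ φ : boundedBy z →+o ℝ≥0∞, φ ⟨z, self_mem_boundedBy z⟩ = 1 ∧ 1 ≤ φ ⟨x', hx'⟩ := by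
  obtain ⟨f, hf, hfz⟩ := exists_monotone_addMonoidHom (ForcedOrder.zero_le (x' := x') h0)
    ForcedOrder.exists_le_nsmul (ForcedOrder.not_unit_le_zero h0 hx' H)
  have hf₀ (a : ForcedOrder z x') : 0 ≤ f a := by simpa using hf (ForcedOrder.zero_le h0 a)
  let φ : boundedBy z →+o ℝ≥0∞ :=
    { toFun s := ENNReal.ofReal (f ⟨s.1, s.2⟩)
      map_zero' := by
        change ENNReal.ofReal (f 0) = 0
        rw [map_zero, ENNReal.ofReal_zero]
      map_add' a b := by
        rw [← ENNReal.ofReal_add (hf₀ _) (hf₀ _), ← map_add]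
        rfl
      monotone' a b hab := ENNReal.ofReal_le_ofReal (hf (ForcedOrder.mk_le_mk _ _ hab)) }
  refine ⟨φ, ?_, ?_⟩
  · change ENNReal.ofReal (f ⟨z, _⟩) = 1
    rw [hfz, ENNReal.ofReal_one]
  · change 1 ≤ ENNReal.ofReal (f ⟨x', hx'⟩)
    rw [← ENNReal.ofReal_one, ← hfz]
    exact ENNReal.ofReal_le_ofReal (hf (ForcedOrder.unit_le hx'))

open scoped Classical in
noncomputable def extendTop (I : AddSubmonoid S) (hI : ∀ ⦃a b : S⦄, a ≤ b → b ∈ I → a ∈ I)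
    (h0 : ∀ s : S, 0 ≤ s) (φ : I →+o ℝ≥0∞) : S →+o ℝ≥0∞ where
  toFun s := if h : s ∈ I then φ ⟨s, h⟩ else ⊤
  map_zero' := by
    rw [dif_pos I.zero_mem]
    exact map_zero φ
  map_add' a b := by
    by_cases ha : a ∈ I
    · by_cases hb : b ∈ I
      · rw [dif_pos (I.add_mem ha hb), dif_pos ha, dif_pos hb, ← map_add]
        rfl
      · rw [dif_neg fun hab => hb (hI (le_add_of_nonneg_left (h0 a)) hab), dif_neg hb, add_top]
    · rw [dif_neg fun hab => ha (hI (le_add_of_nonneg_right (h0 b)) hab), dif_neg ha, top_add]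
  monotone' a b hab := by
    dsimp only
    by_cases hb : b ∈ I
    · rw [dif_pos hb, dif_pos (hI hab hb)]
      exact φ.monotone' hab
    · rw [dif_neg hb]
      exact le_top

theorem extendTop_of_mem {I : AddSubmonoid S} {hI : ∀ ⦃a b : S⦄, a ≤ b → b ∈ I → a ∈ I}
    {h0 : ∀ s : S, 0 ≤ s} {φ : I →+o ℝ≥0∞} {s : S} (hs : s ∈ I) :
    extendTop I hI h0 φ s = φ ⟨s, hs⟩ :=
  dif_pos hs

theorem extendTop_of_notMem {I : AddSubmonoid S} {hI : ∀ ⦃a b : S⦄, a ≤ b → b ∈ I → a ∈ I}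
    {h0 : ∀ s : S, 0 ≤ s} {φ : I →+o ℝ≥0∞} {s : S} (hs : s ∉ I) :
    extendTop I hI h0 φ s = ⊤ :=
  dif_neg hs

end OrderedAddMonoid

section Order

variable {S : Type*} [PartialOrder S] {x y z : S}

theorem WayBelow.le (h : WayBelow x y) : x ≤ y := by
  obtain ⟨n, hn⟩ := h (fun _ => y) y monotone_const (by simp [isLUB_singleton]) le_rfl
  exact hn

theorem WayBelow.trans_le (h : WayBelow x y) (hyz : y ≤ z) : WayBelow x z :=
  fun f s hf hs hzs => h f s hf hs (hyz.trans hzs)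

theorem LE.le.trans_wayBelow (hxy : x ≤ y) (h : WayBelow y z) : WayBelow x z :=
  fun f s hf hs hzs => (h f s hf hs hzs).imp fun _ => hxy.trans

noncomputable def regularize (g : S → ℝ≥0∞) (x : S) : ℝ≥0∞ :=
  ⨆ t : {t : S // WayBelow t x}, g t

theorem le_regularize (g : S → ℝ≥0∞) {t x : S} (h : WayBelow t x) : g t ≤ regularize g x :=
  le_iSup_of_le (⟨t, h⟩ : {t : S // WayBelow t x}) le_rfl

theorem regularize_le {g : S → ℝ≥0∞} (hg : Monotone g) (x : S) : regularize g x ≤ g x :=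
  iSup_le fun t => hg t.2.le

theorem regularize_mono (g : S → ℝ≥0∞) : Monotone (regularize g) := fun _ _ hxy =>
  iSup_le fun t => le_regularize g (t.2.trans_le hxy)

end Order

section CuSemigroup

variable {S : Type*} [AddCommMonoid S] [PartialOrder S] {x y : S}

theorem IsCuSemigroup.isOrderedAddMonoid (hCu : IsCuSemigroup S) : IsOrderedAddMonoid S where
  add_le_add_left _ _ h _ := hCu.add_le_add h le_rfl

theorem IsCuSemigroup.zero_wayBelow (hCu : IsCuSemigroup S) (y : S) : WayBelow 0 y :=
  fun _ _ _ _ _ => ⟨0, hCu.zero_le _⟩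

theorem IsCuSemigroup.exists_wayBelow_isLUB (hCu : IsCuSemigroup S) (x : S) :
    ∃ f : ℕ → S, Monotone f ∧ (∀ n, WayBelow (f n) x) ∧ IsLUB (Set.range f) x := by
  obtain ⟨f, hf, hlub⟩ := hCu.O2 x
  exact ⟨f, monotone_nat_of_le_succ fun n => (hf n).le,
    fun n => (hf n).trans_le (hlub.1 ⟨n + 1, rfl⟩), hlub⟩

theorem IsCuSemigroup.exists_wayBelow_ne_zero (hCu : IsCuSemigroup S) (hy : y ≠ 0) :
    ∃ y', WayBelow y' y ∧ y' ≠ 0 := by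
  obtain ⟨f, -, hf, hlub⟩ := hCu.exists_wayBelow_isLUB y
  by_contra! h
  refine hy (le_antisymm (hlub.2 ?_) (hCu.zero_le y))
  rintro _ ⟨n, rfl⟩
  exact (h _ (hf n)).le

theorem IsCuSemigroup.exists_wayBelow_wayBelow (hCu : IsCuSemigroup S) (h : WayBelow x y) :
    ∃ c, WayBelow x c ∧ WayBelow c y := by
  obtain ⟨f, hf, hlub⟩ := hCu.O2 y
  obtain ⟨n, hn⟩ := h f y (monotone_nat_of_le_succ fun n => (hf n).le) hlub le_rfl
  exact ⟨f (n + 1), hn.trans_wayBelow (hf n), (hf (n + 1)).trans_le (hlub.1 ⟨n + 2, rfl⟩)⟩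

theorem IsCuSemigroup.exists_le_add_of_wayBelow_add (hCu : IsCuSemigroup S) {u : S}
    (h : WayBelow u (x + y)) : ∃ a b, WayBelow a x ∧ WayBelow b y ∧ u ≤ a + b := by
  obtain ⟨f, hf, hfx, hflub⟩ := hCu.exists_wayBelow_isLUB x
  obtain ⟨g, hg, hgy, hglub⟩ := hCu.exists_wayBelow_isLUB y
  obtain ⟨n, hn⟩ := h _ _ (fun i j hij => hCu.add_le_add (hf hij) (hg hij))
    (hCu.O4 f g x y hf hg hflub hglub) le_rfl
  exact ⟨f n, g n, hfx n, hgy n, hn⟩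

theorem isFunctional_regularize (hCu : IsCuSemigroup S) (g : S →+o ℝ≥0∞) :
    IsFunctional (regularize g) where
  mono := regularize_mono g
  map_zero := le_antisymm ((regularize_le g.monotone' 0).trans_eq g.map_zero) bot_le
  map_add x y := by
    refine le_antisymm (iSup_le fun u => ?_) ?_
    · obtain ⟨a, b, ha, hb, hu⟩ := hCu.exists_le_add_of_wayBelow_add u.2
      calc g u ≤ g (a + b) := g.monotone' hu
        _ = g a + g b := map_add g a b
        _ ≤ _ := add_le_add (le_regularize g ha) (le_regularize g hb)
    · have := Nonempty.intro (⟨0, hCu.zero_wayBelow x⟩ : {t // WayBelow t x})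
      have := Nonempty.intro (⟨0, hCu.zero_wayBelow y⟩ : {t // WayBelow t y})
      refine ENNReal.iSup_add_iSup_le fun a b => ?_
      rw [← map_add]
      exact le_regularize g (hCu.O3 a.2 b.2)
  map_sup f s hf hlub := by
    refine le_antisymm (iSup_le fun t => ?_)
      (iSup_le fun n => regularize_mono g (hlub.1 ⟨n, rfl⟩))
    obtain ⟨c, htc, hcs⟩ := hCu.exists_wayBelow_wayBelow t.2
    obtain ⟨n, hn⟩ := hcs f s hf hlub le_rfl
    exact (le_regularize g (htc.trans_le hn)).trans (le_iSup (fun n => regularize g (f n)) n)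

open scoped Classical in
def HasTrivialFunctionals (S : Type*) [AddCommMonoid S] [PartialOrder S] : Prop :=
  ∀ l : S → ℝ≥0∞, IsFunctional l →
    (∀ x : S, l x = 0) ∨ (∀ x : S, l x = if x = 0 then 0 else ⊤)

end CuSemigroup

namespace HasTrivialFunctionals

variable {S : Type*} [AddCommMonoid S] [PartialOrder S]

theorem eq_zero_of_wayBelow (hfun : HasTrivialFunctionals S)
    (hCu : IsCuSemigroup S) (g : S →+o ℝ≥0∞) {z : S} (hz : z ≠ 0) (hgz : g z ≠ ⊤) {t x : S}
    (ht : WayBelow t x) : g t = 0 := by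
  rcases hfun _ (isFunctional_regularize hCu g) with h | h
  · exact le_antisymm ((le_regularize g ht).trans_eq (h x)) bot_le
  · refine absurd (top_le_iff.1 ?_) hgz
    simpa [h z, hz] using regularize_le g.monotone' z

theorem exists_le_nsmul_of_wayBelow (hfun : HasTrivialFunctionals S) (hCu : IsCuSemigroup S)
    {z : S} (hz : z ≠ 0) {t x : S} (ht : WayBelow t x) : ∃ N : ℕ, t ≤ N • z := by
  have := hCu.isOrderedAddMonoid
  let g := extendTop (boundedBy z) (fun _ _ => mem_boundedBy_of_le) hCu.zero_le 0
  have hgz : g z ≠ ⊤ := by simp [g, extendTop_of_mem (self_mem_boundedBy z)]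
  by_contra hN
  have hgt := hfun.eq_zero_of_wayBelow hCu g hz hgz ht
  rw [extendTop_of_notMem hN] at hgt
  exact ENNReal.top_ne_zero hgt

theorem exists_succ_nsmul_le_nsmul (hfun : HasTrivialFunctionals S) (hCu : IsCuSemigroup S)
    {z : S} (hz : z ≠ 0) {x' x : S} (hx : WayBelow x' x) : ∃ t : ℕ, (t + 1) • x' ≤ t • z := by
  have := hCu.isOrderedAddMonoid
  by_contra! H
  have hx' : x' ∈ boundedBy z := hfun.exists_le_nsmul_of_wayBelow hCu hz hx
  obtain ⟨φ, hφz, hφx'⟩ := exists_ennrealState_of_forall_not_succ_nsmul_le hCu.zero_le hx' H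
  let g := extendTop (boundedBy z) (fun _ _ => mem_boundedBy_of_le) hCu.zero_le φ
  have hgz : g z ≠ ⊤ := by simp [g, extendTop_of_mem (self_mem_boundedBy z), hφz]
  have hgx' := hfun.eq_zero_of_wayBelow hCu g hz hgz hx
  rw [extendTop_of_mem hx'] at hgx'
  exact one_ne_zero (le_antisymm (hφx'.trans hgx'.le) bot_le)

end HasTrivialFunctionals

open scoped Classical in
theorem stmt_10_general {S : Type*} [AddCommMonoid S] [PartialOrder S]
    (hCu : IsCuSemigroup S) (m n : ℕ)
    (hcmp : ∀ (x : S) (y : Fin (m + 1) → S),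
      (∀ j, ∃ k : ℕ, (k + 1) • x ≤ k • y j) → x ≤ ∑ j, y j)
    (hdiv : ∀ x : S, ∀ k : ℕ, ∀ x' : S, WayBelow x' x →
      ∃ z : S, k • z ≤ x ∧ x' ≤ ((k + 1) * (n + 1)) • z)
    (hfun : ∀ l : S → ℝ≥0∞, IsFunctional l →
      (∀ x : S, l x = 0) ∨ (∀ x : S, l x = if x = 0 then 0 else ⊤)) :
    ∀ x y : S, y ≠ 0 → x ≤ y := by
  intro x y hy
  obtain ⟨y', hy'y, hy'⟩ := hCu.exists_wayBelow_ne_zero hy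
  obtain ⟨z, hzy, hy'z⟩ := hdiv y (m + 1) y' hy'y
  have hz : z ≠ 0 := by
    rintro rfl
    exact hy' (le_antisymm (by simpa using hy'z) (hCu.zero_le y'))
  obtain ⟨f, -, hfx, hlub⟩ := hCu.exists_wayBelow_isLUB x
  refine hlub.2 (Set.forall_mem_range.2 fun i => ?_)
  calc f i ≤ ∑ _j : Fin (m + 1), z :=
        hcmp _ _ fun _ => HasTrivialFunctionals.exists_succ_nsmul_le_nsmul hfun hCu hz (hfx i)
    _ = (m + 1) • z := by simp
    _ ≤ y := hzy

open scoped Classical in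
/-- If a Cu-semigroup with (O5) has `m`-comparison, is `n`-almost divisible, and its only
functionals are the zero functional and the `{0,∞}`-valued one, then any two elements
with nonzero target compare. -/
theorem stmt_10 {S : Type*} [AddCommMonoid S] [PartialOrder S]
    (hCu : IsCuSemigroup S) (hO5 : SatisfiesO5 S) (m n : ℕ)
    (hcmp : ∀ (x : S) (y : Fin (m + 1) → S),
      (∀ j, ∃ k : ℕ, (k + 1) • x ≤ k • y j) → x ≤ ∑ j, y j)
    (hdiv : ∀ x : S, ∀ k : ℕ, ∀ x' : S, WayBelow x' x →
      ∃ z : S, k • z ≤ x ∧ x' ≤ ((k + 1) * (n + 1)) • z)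
    (hfun : ∀ l : S → ℝ≥0∞, IsFunctional l →
      (∀ x : S, l x = 0) ∨ (∀ x : S, l x = if x = 0 then 0 else ⊤)) :
    ∀ x y : S, y ≠ 0 → x ≤ y :=
  stmt_10_general hCu m n hcmp hdiv hfun
end

section
/- Let S be a Cu-semigroup satisfying (O5), let μ be a functional on S, and let I be the support ideal of μ, that is, the smallest ideal of S containing {x ∈ S : μ(x) < ∞}. Then for every x ∈ S: x ∈ I if and only if μ(x') < ∞ for every x' ∈ S with x' ≪ x. (Equivalently, λ_I(x) = 0, where λ_I is the functional taking the value 0 on I and ∞ on S \ I.) -/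
open scoped ENNReal

/-- An ideal of a Cu-semigroup. -/
structure IsIdeal {S : Type*} [AddCommMonoid S] [PartialOrder S] (I : Set S) : Prop where
  zero_mem : (0 : S) ∈ I
  hered : ∀ ⦃x y : S⦄, y ≤ x → x ∈ I → y ∈ I
  add_mem : ∀ ⦃x y : S⦄, x ∈ I → y ∈ I → x + y ∈ I
  supClosed : ∀ (f : ℕ → S) (s : S), Monotone f → (∀ n, f n ∈ I) →
    IsLUB (Set.range f) s → s ∈ I


section Aux

variable {S : Type*} [AddCommMonoid S] [PartialOrder S]

lemma wayBelow_le {x y : S} (h : WayBelow x y) : x ≤ y := by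
  obtain ⟨n, hn⟩ := h (fun _ => y) y monotone_const
    ⟨fun z hz => by rcases hz with ⟨m, rfl⟩; exact le_rfl,
     fun z hz => hz ⟨0, rfl⟩⟩ le_rfl
  exact hn

lemma le_wayBelow {x a b : S} (hxa : x ≤ a) (h : WayBelow a b) : WayBelow x b :=
  fun f s hf hs hb => (h f s hf hs hb).imp fun n hn => hxa.trans hn

lemma wayBelow_le_right {x a b : S} (h : WayBelow x a) (hab : a ≤ b) : WayBelow x b :=
  fun f s hf hs hb => h f s hf hs (hab.trans hb)

end Aux

/-- Characterization of membership in the support ideal of a functional. -/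
theorem stmt_15 {S : Type*} [AddCommMonoid S] [PartialOrder S]
    (hCu : IsCuSemigroup S) (hO5 : SatisfiesO5 S)
    (mu : S → ℝ≥0∞) (hmu : IsFunctional mu) (I : Set S)
    (hI : IsIdeal I) (hsub : {x : S | mu x < ⊤} ⊆ I)
    (hmin : ∀ J : Set S, IsIdeal J → {x : S | mu x < ⊤} ⊆ J → I ⊆ J) :
    ∀ x : S, x ∈ I ↔ ∀ x' : S, WayBelow x' x → mu x' < ⊤ := by

  intro x
  constructor
  · -- forward: I ⊆ J where J is the set of x with all way-below elements finite
    set J : Set S := {x : S | ∀ x' : S, WayBelow x' x → mu x' < ⊤} with hJ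
    have hJideal : IsIdeal J := by
      constructor
      · intro x' hx'
        have := wayBelow_le hx'
        calc mu x' ≤ mu 0 := hmu.mono this
          _ = 0 := hmu.map_zero
          _ < ⊤ := by simp
      · intro a b hba ha x' hx'
        exact ha x' (wayBelow_le_right hx' hba)
      · intro a b ha hb z' hz'
        obtain ⟨f, hf, hfa⟩ := hCu.O2 a
        obtain ⟨g, hg, hgb⟩ := hCu.O2 b
        have hfm : Monotone f := monotone_nat_of_le_succ fun n => wayBelow_le (hf n)
        have hgm : Monotone g := monotone_nat_of_le_succ fun n => wayBelow_le (hg n)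
        have hsum := hCu.O4 f g a b hfm hgm hfa hgb
        have hsm : Monotone (fun n => f n + g n) :=
          fun m n hmn => hCu.add_le_add (hfm hmn) (hgm hmn)
        obtain ⟨n, hn⟩ := hz' (fun n => f n + g n) (a + b) hsm hsum le_rfl
        have hfn : mu (f n) < ⊤ := ha (f n)
          (wayBelow_le_right (hf n) (hfa.1 ⟨n + 1, rfl⟩))
        have hgn : mu (g n) < ⊤ := hb (g n)
          (wayBelow_le_right (hg n) (hgb.1 ⟨n + 1, rfl⟩))
        calc mu z' ≤ mu (f n + g n) := hmu.mono hn
          _ = mu (f n) + mu (g n) := hmu.map_add _ _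
          _ < ⊤ := ENNReal.add_lt_top.2 ⟨hfn, hgn⟩
      · intro f s hfm hfJ hfs x' hx'
        obtain ⟨g, hg, hgs⟩ := hCu.O2 s
        have hgm : Monotone g := monotone_nat_of_le_succ fun n => wayBelow_le (hg n)
        obtain ⟨m, hm⟩ := hx' g s hgm hgs le_rfl
        have hgm1 : WayBelow (g (m + 1)) s :=
          wayBelow_le_right (hg (m + 1)) (hgs.1 ⟨m + 2, rfl⟩)
        obtain ⟨n, hn⟩ := hgm1 f s hfm hfs le_rfl
        exact hfJ n x' (wayBelow_le_right (le_wayBelow hm (hg m)) hn)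
    exact fun hxI => hmin J hJideal
      (fun y hy x' hx' => lt_of_le_of_lt (hmu.mono (wayBelow_le hx')) hy) hxI
  · intro h
    obtain ⟨f, hf, hfx⟩ := hCu.O2 x
    have hfm : Monotone f := monotone_nat_of_le_succ fun n => wayBelow_le (hf n)
    refine hI.supClosed f x hfm (fun n => hsub ?_) hfx
    exact h (f n) (wayBelow_le_right (hf n) (hfx.1 ⟨n + 1, rfl⟩))
end
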